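/- arXiv:1803.05531 — 2 statements merged into one kernel-verified Lean document; each statement's English description precedes it below -/
import Mathlib

section
/- Let f_1, ..., f_N be unit vectors in C^d (or R^d) with d ≤ N. Then the frame potential FP = Σ_{i=1}^N Σ_{j=1}^N |⟨f_i, f_j⟩|^2 satisfies FP ≥ N^2/d, with equality if and only if the vectors form a unit norm tight frame, i.e., the synthesis operator F (the d×N matrix with columns f_i) satisfies F F* = (N/d) I. -/
/-!
Let `S = ∑ᵢ ⟪fᵢ, ·⟫ fᵢ` be the frame operator and `(eₖ)` an orthonormal basis of the
`d`-dimensional space. The frame potential is the squared Hilbert–Schmidt norm `∑ₖ ‖S eₖ‖²`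
of `S`, and `tr S = ∑ᵢ ‖fᵢ‖² = N`. Expanding `∑ₖ ‖S eₖ - (N/d) eₖ‖²` with these two facts gives
`FP = N²/d + ∑ₖ ‖S eₖ - (N/d) eₖ‖²`, so `FP ≥ N²/d`, with equality iff `S = (N/d) • id`.
As `S` is self-adjoint, this holds iff its quadratic form `∑ᵢ |⟪fᵢ, x⟫|²` is `(N/d) ‖x‖²`.
-/

open Finset RCLike
open scoped InnerProductSpace

section Frame

variable {𝕜 E ι : Type*} [RCLike 𝕜] [NormedAddCommGroup E] [InnerProductSpace 𝕜 E] [Fintype ι]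

variable (𝕜) in
noncomputable def framePotential (f : ι → E) : ℝ := ∑ i, ∑ j, ‖⟪f i, f j⟫_𝕜‖ ^ 2

variable (𝕜) in
noncomputable def frameOperator (f : ι → E) : E →ₗ[𝕜] E :=
  ∑ i, (innerₛₗ 𝕜 (f i)).smulRight (f i)

variable (f : ι → E)

theorem frameOperator_apply (x : E) : frameOperator 𝕜 f x = ∑ i, ⟪f i, x⟫_𝕜 • f i := by
  simp [frameOperator]

theorem inner_frameOperator_self (x : E) :
    ⟪frameOperator 𝕜 f x, x⟫_𝕜 = ((∑ i, ‖⟪f i, x⟫_𝕜‖ ^ 2 : ℝ) : 𝕜) := by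
  simp only [frameOperator_apply, sum_inner, inner_smul_left, RCLike.conj_mul, ofReal_sum,
    ofReal_pow]

theorem inner_frameOperator_right (x y : E) :
    ⟪x, frameOperator 𝕜 f y⟫_𝕜 = ∑ i, ⟪x, f i⟫_𝕜 * ⟪f i, y⟫_𝕜 := by
  simp [frameOperator_apply, inner_sum, inner_smul_right, mul_comm]

theorem isSymmetric_frameOperator : (frameOperator 𝕜 f).IsSymmetric := by
  intro x y
  rw [inner_frameOperator_right, frameOperator_apply, sum_inner]
  simp [inner_smul_left, inner_conj_symm]

theorem frameOperator_eq_smul_id_iff (c : ℝ) :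
    frameOperator 𝕜 f = (c : 𝕜) • LinearMap.id ↔ ∀ x, ∑ i, ‖⟪f i, x⟫_𝕜‖ ^ 2 = c * ‖x‖ ^ 2 := by
  have hsymm : (frameOperator 𝕜 f - (c : 𝕜) • LinearMap.id).IsSymmetric :=
    (isSymmetric_frameOperator f).sub (LinearMap.IsSymmetric.id.smul (conj_ofReal c))
  rw [← sub_eq_zero, ← hsymm.inner_map_self_eq_zero]
  refine forall_congr' fun x => ?_
  rw [LinearMap.sub_apply, inner_sub_left, inner_frameOperator_self, LinearMap.smul_apply,
    LinearMap.id_apply, inner_smul_left, inner_self_eq_norm_sq_to_K, conj_ofReal, sub_eq_zero]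
  exact_mod_cast Iff.rfl

namespace OrthonormalBasis

variable {κ : Type*} [Fintype κ] (b : OrthonormalBasis κ 𝕜 E)

theorem sum_norm_sub_smul_sq (T : E →ₗ[𝕜] E) (c : ℝ) :
    ∑ k, ‖T (b k) - (c : 𝕜) • b k‖ ^ 2
      = ∑ k, ‖T (b k)‖ ^ 2 - 2 * c * ∑ k, re ⟪T (b k), b k⟫_𝕜 + c ^ 2 * Fintype.card κ := by
  simp only [@norm_sub_sq 𝕜, inner_smul_right, re_ofReal_mul, norm_smul, b.orthonormal.1,
    norm_ofReal, mul_one, sq_abs, sum_add_distrib, sum_sub_distrib, ← mul_sum, mul_assoc,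
    sum_const, card_univ, nsmul_eq_mul]
  ring

theorem sum_norm_sub_smul_sq_eq_zero_iff (T : E →ₗ[𝕜] E) (c : 𝕜) :
    ∑ k, ‖T (b k) - c • b k‖ ^ 2 = 0 ↔ T = c • LinearMap.id := by
  simp only [sum_eq_zero_iff_of_nonneg (fun _ _ => sq_nonneg _), mem_univ, true_implies,
    sq_eq_zero_iff, norm_eq_zero, sub_eq_zero]
  exact ⟨fun h => b.toBasis.ext fun k => by simpa using h k, fun h k => by simp [h]⟩

end OrthonormalBasis

variable {κ : Type*} [Fintype κ] (b : OrthonormalBasis κ 𝕜 E)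

theorem sum_re_inner_frameOperator_basis :
    ∑ k, re ⟪frameOperator 𝕜 f (b k), b k⟫_𝕜 = ∑ i, ‖f i‖ ^ 2 := by
  simp only [inner_frameOperator_self, ofReal_re]
  rw [sum_comm]
  exact sum_congr rfl fun i _ => b.sum_sq_norm_inner_left (f i)

theorem sum_norm_frameOperator_basis_sq :
    ∑ k, ‖frameOperator 𝕜 f (b k)‖ ^ 2 = framePotential 𝕜 f := by
  have hS := isSymmetric_frameOperator (𝕜 := 𝕜) f
  have key : ∑ k, ⟪frameOperator 𝕜 f (b k), frameOperator 𝕜 f (b k)⟫_𝕜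
      = ∑ i, ⟪frameOperator 𝕜 f (f i), f i⟫_𝕜 := by
    simp_rw [inner_frameOperator_right, hS _ (f _)]
    rw [sum_comm]
    refine sum_congr rfl fun i _ => ?_
    simp_rw [mul_comm _ ⟪f i, _⟫_𝕜, b.sum_inner_mul_inner]
  simp_rw [inner_self_eq_norm_sq_to_K, inner_frameOperator_self, ← ofReal_pow, ← ofReal_sum,
    ofReal_inj] at key
  rw [key, framePotential, sum_comm]

theorem framePotential_eq_add_sum_norm_sq :
    framePotential 𝕜 f = (∑ i, ‖f i‖ ^ 2) ^ 2 / Fintype.card κ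
      + ∑ k, ‖frameOperator 𝕜 f (b k)
          - (((∑ i, ‖f i‖ ^ 2) / Fintype.card κ : ℝ) : 𝕜) • b k‖ ^ 2 := by
  rw [b.sum_norm_sub_smul_sq, sum_norm_frameOperator_basis_sq, sum_re_inner_frameOperator_basis]
  generalize ∑ i, ‖f i‖ ^ 2 = t
  generalize (Fintype.card κ : ℝ) = n
  rcases eq_or_ne n 0 with rfl | hn
  · simp -- `t / 0 = 0` covers the zero-dimensional space
  · field_simp
    ring

variable [FiniteDimensional 𝕜 E]

theorem sq_sum_norm_sq_div_finrank_le_framePotential :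
    (∑ i, ‖f i‖ ^ 2) ^ 2 / Module.finrank 𝕜 E ≤ framePotential 𝕜 f := by
  rw [framePotential_eq_add_sum_norm_sq f (stdOrthonormalBasis 𝕜 E), Fintype.card_fin]
  exact le_add_of_nonneg_right (by positivity)

theorem framePotential_eq_iff_frameOperator_eq_smul_id :
    framePotential 𝕜 f = (∑ i, ‖f i‖ ^ 2) ^ 2 / Module.finrank 𝕜 E ↔
      frameOperator 𝕜 f = (((∑ i, ‖f i‖ ^ 2) / Module.finrank 𝕜 E : ℝ) : 𝕜) • LinearMap.id := by
  rw [framePotential_eq_add_sum_norm_sq f (stdOrthonormalBasis 𝕜 E), Fintype.card_fin,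
    add_eq_left, OrthonormalBasis.sum_norm_sub_smul_sq_eq_zero_iff]

end Frame

theorem frame_potential_ge_and_eq_iff_tight_general (d N : ℕ)
    (f : Fin N → EuclideanSpace ℂ (Fin d)) (hnorm : ∀ i, ‖f i‖ = 1) :
    (N : ℝ) ^ 2 / d ≤ ∑ i : Fin N, ∑ j : Fin N, ‖(inner ℂ (f i) (f j) : ℂ)‖ ^ 2 ∧
    ((∑ i : Fin N, ∑ j : Fin N, ‖(inner ℂ (f i) (f j) : ℂ)‖ ^ 2 = (N : ℝ) ^ 2 / d) ↔
      (∀ x : EuclideanSpace ℂ (Fin d),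
        ∑ i : Fin N, ‖(inner ℂ (f i) x : ℂ)‖ ^ 2 = ((N : ℝ) / d) * ‖x‖ ^ 2)) := by
  have hsum : ∑ i, ‖f i‖ ^ 2 = (N : ℝ) := by simp [hnorm]
  have hbound := sq_sum_norm_sq_div_finrank_le_framePotential (𝕜 := ℂ) f
  have heq := framePotential_eq_iff_frameOperator_eq_smul_id (𝕜 := ℂ) f
  rw [hsum, finrank_euclideanSpace_fin] at hbound heq
  exact ⟨hbound, heq.trans (frameOperator_eq_smul_id_iff f _)⟩

/-- The frame potential `Σᵢ Σⱼ |⟨fᵢ, fⱼ⟩|²` of `N ≥ d` unit vectors in `ℂ^d` is at least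
`N²/d`, with equality if and only if the vectors form a unit norm tight frame
(frame bound `N/d`). -/
theorem frame_potential_ge_and_eq_iff_tight (d N : ℕ) (hd : 0 < d) (hN : d ≤ N)
    (f : Fin N → EuclideanSpace ℂ (Fin d)) (hnorm : ∀ i, ‖f i‖ = 1) :
    (N : ℝ) ^ 2 / d ≤ ∑ i : Fin N, ∑ j : Fin N, ‖(inner ℂ (f i) (f j) : ℂ)‖ ^ 2 ∧
    ((∑ i : Fin N, ∑ j : Fin N, ‖(inner ℂ (f i) (f j) : ℂ)‖ ^ 2 = (N : ℝ) ^ 2 / d) ↔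
      (∀ x : EuclideanSpace ℂ (Fin d),
        ∑ i : Fin N, ‖(inner ℂ (f i) x : ℂ)‖ ^ 2 = ((N : ℝ) / d) * ‖x‖ ^ 2)) :=
  frame_potential_ge_and_eq_iff_tight_general d N f hnorm
end

section
/- Let d ≥ 12 be even, k = (d+2)/2, λ = ⌈k(k-1)/(d+1)⌉ = ⌈d(d+2)/(4(d+1))⌉, and suppose B = {B_i}_{i=1}^{b} is a (d+1, k, λ) block design on {1,...,d+1}. Let {f_i}_{i=1}^{d+1} ⊂ R^d be a simplex ETF with ⟨f_i, f_j⟩ = -1/d for i ≠ j, and g_i = (Σ_{j∈B_i} f_j)/||Σ_{j∈B_i} f_j||. Then the maximum of |⟨x, y⟩| over distinct vectors x, y in {f_i}_{i=1}^{d+1} ∪ {g_i}_{i=1}^{b} is at most max{sqrt((d+2)/d^2), 4/(d+2) + 3/(d(d+2))}. -/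
/-!
For even `d` write `d = 4s` or `d = 4s + 2`; in both cases `λ = s + 1`, and counting pairs through
a point gives the replication number `r = 2λ`. For `d = 4s` the count `b k = (d + 1) r` becomes
`b (2s + 1) = (4s + 1)(2s + 2) ≡ -1 (mod 2s + 1)`, so no such design exists. For `d = 4s + 2` we
get `r = k` and the design is symmetric, so any two blocks meet in exactly `λ` points: the
intersection sizes of a fixed block with the others have mean `λ` and second moment `λ²`. The Gram
matrix of the frame is then determined by these counts: `⟨g_i, g_j⟩ = -1/d`, and
`|⟨f_x, g_i⟩|` is `1/√(d+2)` or `√(d+2)/d` according as `x ∈ B_i` or not.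
-/

open Finset RealInnerProductSpace

theorem Finset.eq_of_sum_eq_of_sum_sq_eq {ι R : Type*} [CommRing R] [LinearOrder R]
    [IsStrictOrderedRing R] {s : Finset ι} {m : ι → R} {μ : R}
    (hsum : ∑ j ∈ s, m j = #s * μ) (hsq : ∑ j ∈ s, m j ^ 2 = #s * μ ^ 2) :
    ∀ j ∈ s, m j = μ := by
  have hvar : ∑ j ∈ s, (m j - μ) ^ 2 = 0 := by
    simp only [sub_sq, sum_add_distrib, sum_sub_distrib, ← sum_mul, ← mul_sum, sum_const,
      nsmul_eq_mul, hsum, hsq]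
    ring
  intro j hj
  rw [← sub_eq_zero, ← sq_eq_zero_iff]
  exact (sum_eq_zero_iff_of_nonneg fun j _ => sq_nonneg (m j - μ)).mp hvar j hj

theorem ceil_mul_add_two_div_eq {d s : ℕ} (hd : d = 4 * s + 2 ∨ d = 4 * s) (hs : 0 < s) :
    ⌈((d : ℚ) * (d + 2)) / (4 * ((d : ℚ) + 1))⌉₊ = s + 1 := by
  have hd0 : (0 : ℚ) < 4 * ((d : ℚ) + 1) := by positivity
  have hsQ : (1 : ℚ) ≤ s := by exact_mod_cast hs
  rw [Nat.ceil_eq_iff (Nat.succ_ne_zero s), lt_div_iff₀ hd0, div_le_iff₀ hd0]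
  rcases hd with rfl | rfl <;> push_cast <;> constructor <;> nlinarith

section Design

variable {ι α : Type*} [Fintype ι] [DecidableEq α]

theorem sum_card_inter_eq_sum_card_filter_mem (B : ι → Finset α) (S : Finset α) :
    ∑ i, #(S ∩ B i) = ∑ x ∈ S, #{i | x ∈ B i} := by
  simp only [← filter_mem_eq_inter, card_filter]
  exact sum_comm

theorem sum_card_inter_mul_card_inter (B : ι → Finset α) (S T : Finset α) :
    ∑ i, #(S ∩ B i) * #(T ∩ B i) = ∑ x ∈ S, ∑ y ∈ T, #{i | x ∈ B i ∧ y ∈ B i} := by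
  simp only [← filter_mem_eq_inter, card_filter, sum_mul_sum, ite_zero_mul_ite_zero, mul_one]
  rw [sum_comm]
  exact sum_congr rfl fun x _ => sum_comm

structure IsTwoDesign (B : ι → Finset α) (k lam : ℕ) : Prop where
  card_block : ∀ i, #(B i) = k
  card_filter_pair : ∀ x y, x ≠ y → #{i | x ∈ B i ∧ y ∈ B i} = lam

namespace IsTwoDesign

variable {B : ι → Finset α} {k lam : ℕ}

theorem sum_card_filter_pair (hB : IsTwoDesign B k lam) {S : Finset α} {x : α} (hx : x ∈ S) :
    ∑ y ∈ S, #{i | x ∈ B i ∧ y ∈ B i} = #{i | x ∈ B i} + (#S - 1) * lam := by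
  rw [← add_sum_erase S _ hx,
    sum_congr rfl fun y hy => hB.card_filter_pair x y (ne_of_mem_erase hy).symm, sum_const,
    card_erase_of_mem hx, smul_eq_mul]
  simp only [and_self]

theorem card_filter_mem_mul [Fintype α] (hB : IsTwoDesign B k lam) (x : α) :
    #{i | x ∈ B i} * (k - 1) = (Fintype.card α - 1) * lam := by
  have h := sum_card_inter_mul_card_inter B {x} univ
  simp only [univ_inter, hB.card_block, ← sum_mul, sum_card_inter_eq_sum_card_filter_mem,
    sum_singleton] at h
  rw [hB.sum_card_filter_pair (mem_univ x), card_univ] at h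
  rw [Nat.mul_sub_one, h, Nat.add_sub_cancel_left]

theorem card_mul_eq_sum [Fintype α] (hB : IsTwoDesign B k lam) :
    Fintype.card ι * k = ∑ x, #{i | x ∈ B i} := by
  simpa [hB.card_block] using sum_card_inter_eq_sum_card_filter_mem B univ

theorem card_inter_eq_of_card_filter_mem_eq [Fintype α] [DecidableEq ι] (hB : IsTwoDesign B k lam)
    (hr : ∀ x, #{i | x ∈ B i} = k) (hk : 0 < k) {i j : ι} (hij : i ≠ j) :
    #(B i ∩ B j) = lam := by
  have hcard : Fintype.card ι = Fintype.card α :=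
    Nat.eq_of_mul_eq_mul_right hk <| by simp [hB.card_mul_eq_sum, hr, mul_comm]
  obtain ⟨x, -⟩ := card_pos.mp (hk.trans_eq (hB.card_block i).symm)
  have hn : #(univ.erase i) = Fintype.card α - 1 := by
    rw [card_erase_of_mem (mem_univ i), card_univ, hcard]
  have hkk : k * (k - 1) = #(univ.erase i) * lam := by
    simpa only [hr, hn] using hB.card_filter_mem_mul x
  have hsum : ∑ j ∈ univ.erase i, #(B i ∩ B j) = #(univ.erase i) * lam := by
    have h : ∑ j, #(B i ∩ B j) = k * k := by
      simp [sum_card_inter_eq_sum_card_filter_mem, hr, hB.card_block]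
    rw [← add_sum_erase _ _ (mem_univ i), inter_self, hB.card_block] at h
    rw [← hkk, Nat.mul_sub_one]
    exact Nat.eq_sub_of_add_eq' h
  have hsq : ∑ j ∈ univ.erase i, #(B i ∩ B j) ^ 2 = #(univ.erase i) * lam ^ 2 := by
    have h : ∑ j, #(B i ∩ B j) * #(B i ∩ B j) = k * (k + (k - 1) * lam) := by
      rw [sum_card_inter_mul_card_inter, sum_congr rfl fun x hx => hB.sum_card_filter_pair hx]
      simp [hr, hB.card_block]
    rw [← add_sum_erase _ _ (mem_univ i), inter_self, hB.card_block, mul_add, ← mul_assoc, hkk] at h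
    simpa [sq, mul_assoc] using h
  have h := Finset.eq_of_sum_eq_of_sum_sq_eq (m := fun j => (#(B i ∩ B j) : ℤ)) (μ := lam)
    (by exact_mod_cast hsum) (by exact_mod_cast hsq) j (mem_erase.mpr ⟨hij.symm, mem_univ j⟩)
  exact_mod_cast h

theorem not_of_card_eq_four_mul_add_one [Fintype α] {s : ℕ} (hs : 0 < s)
    (hv : Fintype.card α = 4 * s + 1) : ¬ IsTwoDesign B (2 * s + 1) (s + 1) := by
  intro hB
  have hr : ∀ x, #{i | x ∈ B i} = 2 * s + 2 := by
    intro x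
    have h := hB.card_filter_mem_mul x
    rw [hv, Nat.add_sub_cancel, Nat.add_sub_cancel] at h
    exact Nat.eq_of_mul_eq_mul_right (by omega : 0 < 2 * s) (by rw [h]; ring)
  have hb : Fintype.card ι * (2 * s + 1) = (4 * s + 1) * (2 * s + 2) := by
    simp [hB.card_mul_eq_sum, hr, hv]
  have hdvd : 2 * s + 1 ∣ 1 :=
    (Nat.dvd_add_right (hb ▸ Dvd.intro_left _ rfl)).mp ⟨4 * s + 3, by ring⟩
  have := Nat.dvd_one.mp hdvd
  omega

theorem card_inter_eq_of_card_eq_four_mul_add_three [Fintype α] [DecidableEq ι] {s : ℕ}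
    (hv : Fintype.card α = 4 * s + 3) (hB : IsTwoDesign B (2 * s + 2) (s + 1)) {i j : ι}
    (hij : i ≠ j) : #(B i ∩ B j) = s + 1 := by
  refine hB.card_inter_eq_of_card_filter_mem_eq (fun x => ?_) (by omega) hij
  have h : #{i | x ∈ B i} * (2 * s + 1) = (4 * s + 2) * (s + 1) := by
    simpa [hv] using hB.card_filter_mem_mul x
  exact Nat.eq_of_mul_eq_mul_right (by omega : 0 < 2 * s + 1) (by rw [h]; ring)

end IsTwoDesign

end Design

section Frame

variable {ι E : Type*} [DecidableEq ι] [NormedAddCommGroup E] [InnerProductSpace ℝ E]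

theorem inner_sum_sum_of_inner_eq {f : ι → E} {c : ℝ} (hnorm : ∀ i, ‖f i‖ = 1)
    (hinner : ∀ i j, i ≠ j → ⟪f i, f j⟫ = c) (S T : Finset ι) :
    ⟪∑ x ∈ S, f x, ∑ y ∈ T, f y⟫ = (1 - c) * #(S ∩ T) + c * (#S * #T) := by
  have hpair : ∀ x y, ⟪f x, f y⟫ = (if x = y then 1 - c else 0) + c := by
    intro x y
    by_cases hxy : x = y
    · simp [hxy, hnorm]
    · simp [hxy, hinner x y hxy]
  simp only [sum_inner, inner_sum, hpair, sum_add_distrib, sum_ite_eq', sum_ite_mem, sum_const,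
    nsmul_eq_mul, inter_comm T S]
  ring

variable {d : ℕ} {f : ι → E}

theorem norm_sum_of_two_mul_card_eq (hd : 0 < d) (hnorm : ∀ i, ‖f i‖ = 1)
    (hangle : ∀ i j, i ≠ j → ⟪f i, f j⟫ = -1 / d) {S : Finset ι} (hS : 2 * #S = d + 2) :
    ‖∑ x ∈ S, f x‖ = √(d + 2) / 2 := by
  have hSR : (#S : ℝ) = (d + 2) / 2 := by
    rw [eq_div_iff two_ne_zero, mul_comm]; exact_mod_cast hS
  have hsq : ‖∑ x ∈ S, f x‖ ^ 2 = (d + 2) / 4 := by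
    rw [← real_inner_self_eq_norm_sq, inner_sum_sum_of_inner_eq hnorm hangle, inter_self, hSR]
    field_simp
    ring
  rw [← Real.sqrt_sq (norm_nonneg _), hsq, Real.sqrt_div' _ (by norm_num : (0:ℝ) ≤ 4),
    show (4 : ℝ) = 2 ^ 2 by norm_num, Real.sqrt_sq two_pos.le]

theorem abs_inner_sum_le_of_two_mul_card_eq (hd : 0 < d) (hnorm : ∀ i, ‖f i‖ = 1)
    (hangle : ∀ i j, i ≠ j → ⟪f i, f j⟫ = -1 / d) {S : Finset ι} (hS : 2 * #S = d + 2) (x : ι) :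
    |⟪f x, ∑ y ∈ S, f y⟫| ≤ (d + 2) / (2 * d) := by
  have hdR : (0 : ℝ) < d := by exact_mod_cast hd
  have hSR : (#S : ℝ) = (d + 2) / 2 := by
    rw [eq_div_iff two_ne_zero, mul_comm]; exact_mod_cast hS
  have h := inner_sum_sum_of_inner_eq hnorm hangle {x} S
  rw [sum_singleton] at h
  rw [h, card_singleton, Nat.cast_one, hSR]
  by_cases hx : x ∈ S
  · rw [singleton_inter_of_mem hx, card_singleton, Nat.cast_one, abs_le]
    constructor <;> field_simp <;> linarith
  · rw [singleton_inter_of_notMem hx, card_empty, Nat.cast_zero, abs_le]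
    constructor <;> field_simp <;> linarith

theorem inner_sum_sum_of_four_mul_card_inter_eq (hd : 0 < d) (hnorm : ∀ i, ‖f i‖ = 1)
    (hangle : ∀ i j, i ≠ j → ⟪f i, f j⟫ = -1 / d) {S T : Finset ι} (hS : 2 * #S = d + 2)
    (hT : 2 * #T = d + 2) (hST : 4 * #(S ∩ T) = d + 2) :
    ⟪∑ x ∈ S, f x, ∑ y ∈ T, f y⟫ = -(d + 2) / (4 * d) := by
  have hdR : (d : ℝ) ≠ 0 := by positivity
  have hSR : (#S : ℝ) = (d + 2) / 2 := by
    rw [eq_div_iff two_ne_zero, mul_comm]; exact_mod_cast hS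
  have hTR : (#T : ℝ) = (d + 2) / 2 := by
    rw [eq_div_iff two_ne_zero, mul_comm]; exact_mod_cast hT
  have hSTR : (#(S ∩ T) : ℝ) = (d + 2) / 4 := by
    rw [eq_div_iff four_ne_zero, mul_comm]; exact_mod_cast hST
  rw [inner_sum_sum_of_inner_eq hnorm hangle, hSR, hTR, hSTR]
  field_simp
  ring

theorem abs_inner_sum_elim_le {κ : Type*} (hd : 0 < d) (hnorm : ∀ i, ‖f i‖ = 1)
    (hangle : ∀ i j, i ≠ j → ⟪f i, f j⟫ = -1 / d) {B : κ → Finset ι}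
    (hB : ∀ i, 2 * #(B i) = d + 2) (hBB : ∀ i j, i ≠ j → 4 * #(B i ∩ B j) = d + 2) {g : κ → E}
    (hg : ∀ i, g i = ‖∑ j ∈ B i, f j‖⁻¹ • ∑ j ∈ B i, f j) {a c : ι ⊕ κ} (hac : a ≠ c) :
    |⟪Sum.elim f g a, Sum.elim f g c⟫| ≤ √(d + 2) / d := by
  have hdR : (0 : ℝ) < d := by exact_mod_cast hd
  have hsqrt_sq : √(d + 2 : ℝ) ^ 2 = d + 2 := Real.sq_sqrt (by positivity)
  have hnormB : ∀ i, ‖∑ j ∈ B i, f j‖ = √(d + 2) / 2 := fun i =>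
    norm_sum_of_two_mul_card_eq hd hnorm hangle (hB i)
  have hfg : ∀ x i, |⟪f x, g i⟫| ≤ √(d + 2) / d := by
    intro x i
    rw [hg, real_inner_smul_right, abs_mul, hnormB, abs_inv, abs_of_pos (by positivity)]
    calc (√(d + 2) / 2)⁻¹ * |⟪f x, ∑ j ∈ B i, f j⟫|
        ≤ (√(d + 2) / 2)⁻¹ * ((d + 2) / (2 * d)) := by
          gcongr; exact abs_inner_sum_le_of_two_mul_card_eq hd hnorm hangle (hB i) x
      _ = √(d + 2) / d := by field_simp; rw [hsqrt_sq]
  have hgg : ∀ i j, i ≠ j → ⟪g i, g j⟫ = -1 / d := by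
    intro i j hij
    rw [hg, hg, real_inner_smul_left, real_inner_smul_right, hnormB, hnormB,
      inner_sum_sum_of_four_mul_card_inter_eq hd hnorm hangle (hB i) (hB j) (hBB i j hij)]
    field_simp
    rw [hsqrt_sq]
    ring
  have hdiv : |(-1 / d : ℝ)| ≤ √(d + 2) / d := by
    rw [abs_div, abs_neg, abs_one, abs_of_pos hdR]
    gcongr
    exact Real.one_le_sqrt.mpr (by linarith)
  rcases a with x | i <;> rcases c with y | j
  · exact (hangle x y (by simpa using hac)).symm ▸ hdiv
  · exact hfg x j
  · exact real_inner_comm (f y) (g i) ▸ hfg y i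
  · exact (hgg i j (by simpa using hac)).symm ▸ hdiv

end Frame

/-- For even `d ≥ 12`, `k = (d+2)/2` and `λ = ⌈k(k-1)/(d+1)⌉ = ⌈d(d+2)/(4(d+1))⌉`,
the UNTF obtained by adjoining the normalized block sums of a `(d+1, k, λ)` block
design to a simplex ETF has maximum coherence at most
`max{√((d+2)/d²), 4/(d+2) + 3/(d(d+2))}`. -/
theorem even_design_low_coherence (d b k lam : ℕ) (hd : 12 ≤ d) (heven : Even d)
    (hk : 2 * k = d + 2)
    (hlam : lam = Nat.ceil (((d : ℚ) * (d + 2)) / (4 * ((d : ℚ) + 1))))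
    (f : Fin (d + 1) → EuclideanSpace ℝ (Fin d))
    (hnorm : ∀ i, ‖f i‖ = 1)
    (hangle : ∀ i j, i ≠ j → (inner ℝ (f i) (f j) : ℝ) = -1 / d)
    (B : Fin b → Finset (Fin (d + 1)))
    (hBcard : ∀ i, (B i).card = k)
    (hpair : ∀ x y : Fin (d + 1), x ≠ y →
      (Finset.univ.filter (fun i => x ∈ B i ∧ y ∈ B i)).card = lam)
    (g : Fin b → EuclideanSpace ℝ (Fin d))
    (hg : ∀ i, g i = ‖∑ j ∈ B i, f j‖⁻¹ • ∑ j ∈ B i, f j) :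
    ∀ a c : Fin (d + 1) ⊕ Fin b, a ≠ c →
      |(inner ℝ (Sum.elim f g a) (Sum.elim f g c) : ℝ)| ≤
        max (Real.sqrt (((d : ℝ) + 2) / (d : ℝ) ^ 2))
          (4 / ((d : ℝ) + 2) + 3 / ((d : ℝ) * ((d : ℝ) + 2))) := by
  obtain ⟨s, hds⟩ : ∃ s, d = 4 * s + 2 ∨ d = 4 * s := by
    obtain ⟨t, ht⟩ := heven
    exact ⟨t / 2, by omega⟩
  have hB : IsTwoDesign B k lam := ⟨hBcard, hpair⟩
  obtain rfl : lam = s + 1 := hlam ▸ ceil_mul_add_two_div_eq hds (by omega)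
  have hsqrt : √(((d : ℝ) + 2) / (d : ℝ) ^ 2) = √((d : ℝ) + 2) / d := by
    rw [Real.sqrt_div' _ (sq_nonneg _), Real.sqrt_sq (Nat.cast_nonneg d)]
  rcases hds with rfl | rfl
  · obtain rfl : k = 2 * s + 2 := by omega
    intro a c hac
    rw [hsqrt]
    refine (abs_inner_sum_elim_le (by omega) hnorm hangle (fun i => by rw [hBcard]; ring)
      (fun i j hij => ?_) hg hac).trans (le_max_left _ _)
    rw [hB.card_inter_eq_of_card_eq_four_mul_add_three (by simp) hij]
    ring
  · obtain rfl : k = 2 * s + 1 := by omega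
    exact absurd hB (IsTwoDesign.not_of_card_eq_four_mul_add_one (by omega) (by simp))
end
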